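/- Let P be a finite poset without isolated points, R a retract of P, and suppose R has height one. Then there exists a retract Q of P with Q order-isomorphic to R and Q contained in the set E(P) of extremal points of P. -/

import Mathlib

open Set

/-- Minimal points of a poset. -/
def LSet (α : Type*) [PartialOrder α] : Set α := {x | ∀ y, y ≤ x → y = x}

/-- Maximal points of a poset. -/
def USet (α : Type*) [PartialOrder α] : Set α := {x | ∀ y, x ≤ y → y = x}

/-- Extremal points. -/
def ESet (α : Type*) [PartialOrder α] : Set α := LSet α ∪ USet α

/-- Non-extremal (interior) points. -/
def MSet (α : Type*) [PartialOrder α] : Set α := (ESet α)ᶜ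

/-- No isolated points: every point is comparable to some other point. -/
def NoIsolated (α : Type*) [PartialOrder α] : Prop := ∀ x : α, ∃ y : α, x < y ∨ y < x

/-- Height one: every point is extremal and some strict comparability exists. -/
def HeightOne (α : Type*) [PartialOrder α] : Prop :=
  (∀ x : α, x ∈ ESet α) ∧ ∃ x y : α, x < y

/-- A 4-crown with minimal points a, b and maximal points v, w:
the comparabilities are exactly a<v, a<w, b<v, b<w. -/
def IsCrown {α : Type*} [PartialOrder α] (a b v w : α) : Prop :=
  a < v ∧ a < w ∧ b < v ∧ b < w ∧ ¬ a ≤ b ∧ ¬ b ≤ a ∧ ¬ v ≤ w ∧ ¬ w ≤ v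

/-- The inner of a 4-crown: [a,v] ∩ [b,w]. -/
def crownInner {α : Type*} [PartialOrder α] (a b v w : α) : Set α :=
  {m | a ≤ m ∧ m ≤ v} ∩ {m | b ≤ m ∧ m ≤ w}

/-- An improper 4-crown contained in the extremal points E(P). -/
def IsImproperCrownE {α : Type*} [PartialOrder α] (a b v w : α) : Prop :=
  IsCrown a b v w ∧ a ∈ ESet α ∧ b ∈ ESet α ∧ v ∈ ESet α ∧ w ∈ ESet α ∧
    (crownInner a b v w).Nonempty

/-- Inner points of improper 4-crowns contained in E(P). -/
def innerPts (α : Type*) [PartialOrder α] : Set α :=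
  {m | ∃ a b v w : α, IsImproperCrownE a b v w ∧ m ∈ crownInner a b v w}

/-- Ξ(m): union of all improper 4-crowns with inner point m. -/
def Xi {α : Type*} [PartialOrder α] (m : α) : Set α :=
  (LSet α ∩ {x | x ≤ m}) ∪ (USet α ∩ {x | m ≤ x})

/-- 4-crown bundles: maximal sets Ξ(m) with respect to inclusion. -/
def bundles (α : Type*) [PartialOrder α] : Set (Set α) :=
  {F | ∃ m ∈ innerPts α, F = Xi m ∧
    ∀ m' ∈ innerPts α, Xi m ⊆ Xi m' → Xi m' = Xi m}

/-- R is a retract of the poset on α. -/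
def IsRetract (α : Type*) [PartialOrder α] (R : Set α) : Prop :=
  ∃ r : α → α, Monotone r ∧ (∀ x, r (r x) = r x) ∧ Set.range r = R

/-- C is a retract of the induced subposet on Y. -/
def IsRetractIn {α : Type*} [PartialOrder α] (Y C : Set α) : Prop :=
  ∃ r : Y → Y, Monotone r ∧ (∀ x, r (r x) = r x) ∧
    Set.range r = {y : Y | (y : α) ∈ C}

/-- The comparability graph of the poset is connected. -/
def PosetConnected (α : Type*) [PartialOrder α] : Prop :=
  ∀ x y : α, Relation.ReflTransGen (fun u v => u ≤ v ∨ v ≤ u) x y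

/-- Minimal points of an induced subposet. -/
def minIn {α : Type*} [PartialOrder α] (S : Set α) : Set α :=
  {x ∈ S | ∀ y ∈ S, y ≤ x → y = x}

/-- Maximal points of an induced subposet. -/
def maxIn {α : Type*} [PartialOrder α] (S : Set α) : Set α :=
  {x ∈ S | ∀ y ∈ S, x ≤ y → y = x}

/-!
Let `r` be a retraction onto `R`. Send each minimal point `x` of `R` to a minimal point of `P`
below it and each other (hence maximal) point of `R` to a maximal point of `P` above it. As `R` has
height one, this map `φ` is monotone on `R`; and `r (φ x)` is a point of `R` below (resp. above)
`x`, so `r (φ x) = x`. Hence `φ ∘ r` retracts `P` onto `φ '' R ⊆ E(P)`, and `φ` and `r` are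
mutually inverse isomorphisms between `R` and `φ '' R`.
-/

section

variable {α : Type*} [PartialOrder α]

lemma IsMin.mem_LSet {x : α} (hx : IsMin x) : x ∈ LSet α :=
  fun _ hy => le_antisymm hy (hx hy)

lemma IsMax.mem_USet {x : α} (hx : IsMax x) : x ∈ USet α :=
  fun _ hy => le_antisymm (hx hy) hy

lemma exists_mem_LSet_le [Finite α] (x : α) : ∃ l ∈ LSet α, l ≤ x := by
  obtain ⟨l, hlx, hl⟩ := exists_minimal_le_of_wellFoundedLT (fun _ : α => True) x trivial
  exact ⟨l, (minimal_true.mp hl).mem_LSet, hlx⟩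

lemma exists_mem_USet_ge [Finite α] (x : α) : ∃ u ∈ USet α, x ≤ u := by
  obtain ⟨u, hxu, hu⟩ := exists_maximal_ge_of_wellFoundedGT (fun _ : α => True) x trivial
  exact ⟨u, (maximal_true.mp hu).mem_USet, hxu⟩

lemma map_le_map_iff_of_leftInvOn {r φ : α → α} {R : Set α} (hr : Monotone r)
    (hφ : MonotoneOn φ R) (hrφ : LeftInvOn r φ R) {x y : α} (hx : x ∈ R) (hy : y ∈ R) :
    φ x ≤ φ y ↔ x ≤ y :=
  ⟨fun h => hrφ hx ▸ hrφ hy ▸ hr h, hφ hx hy⟩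

lemma nonempty_orderIso_image_of_leftInvOn {r φ : α → α} {R : Set α} (hr : Monotone r)
    (hφ : MonotoneOn φ R) (hrφ : LeftInvOn r φ R) : Nonempty (φ '' R ≃o R) :=
  let e : R ↪o α := OrderEmbedding.ofMapLEIff (fun x => φ x) fun x y =>
    map_le_map_iff_of_leftInvOn hr hφ hrφ x.2 y.2
  ⟨(OrderIso.setCongr _ _ (image_eq_range φ R)).trans e.orderIso.symm⟩

lemma isRetract_image_of_leftInvOn {r φ : α → α} {R : Set α} (hr : Monotone r)
    (hrange : range r = R) (hφ : MonotoneOn φ R) (hrφ : LeftInvOn r φ R) :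
    IsRetract α (φ '' R) := by
  have hrR : ∀ z, r z ∈ R := fun z => hrange ▸ mem_range_self z
  refine ⟨φ ∘ r, fun a b hab => hφ (hrR a) (hrR b) (hr hab), fun z => ?_, ?_⟩
  · simp only [Function.comp_apply, hrφ (hrR z)]
  · rw [range_comp, hrange]

lemma exists_extremal_section [Finite α] {r : α → α} {R : Set α} (hr : Monotone r)
    (hrR : ∀ z, r z ∈ R) (hfix : ∀ x ∈ R, r x = x) (hR : ∀ x ∈ R, x ∈ minIn R ∪ maxIn R) :
    ∃ φ : α → α, MonotoneOn φ R ∧ LeftInvOn r φ R ∧ ∀ x, φ x ∈ ESet α := by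
  classical
  choose l hl hlle using exists_mem_LSet_le (α := α)
  choose u hu hule using exists_mem_USet_ge (α := α)
  refine ⟨fun x => if x ∈ minIn R then l x else u x, ?_, ?_, ?_⟩
  · intro x hx y hy hxy
    rcases eq_or_ne x y with rfl | hne
    · exact le_rfl
    have hxmin : x ∈ minIn R := (hR x hx).resolve_right fun hxmax => hne (hxmax.2 y hy hxy).symm
    have hymin : y ∉ minIn R := fun hymin => hne (hymin.2 x hx hxy)
    simp only [if_pos hxmin, if_neg hymin]
    exact (hlle x).trans (hxy.trans (hule y))
  · intro x hx
    by_cases hxmin : x ∈ minIn R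
    · simp only [if_pos hxmin]
      exact hxmin.2 _ (hrR _) ((hr (hlle x)).trans (hfix x hx).le)
    · have hxmax : x ∈ maxIn R := (hR x hx).resolve_left hxmin
      simp only [if_neg hxmin]
      exact hxmax.2 _ (hrR _) ((hfix x hx).ge.trans (hr (hule x)))
  · intro x
    dsimp only
    split_ifs
    exacts [Or.inl (hl x), Or.inr (hu x)]

end

theorem stmt11_general {α : Type*} [Fintype α] [PartialOrder α]
    (R : Set α) (hR : IsRetract α R)
    (hht : (∀ x ∈ R, x ∈ minIn R ∪ maxIn R) ∧ ∃ x ∈ R, ∃ y ∈ R, x < y) :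
    ∃ Q : Set α, Q ⊆ ESet α ∧ IsRetract α Q ∧ Nonempty (↥Q ≃o ↥R) := by
  obtain ⟨r, hr, hidem, hrange⟩ := hR
  have hrR : ∀ z, r z ∈ R := fun z => hrange ▸ mem_range_self z
  have hfix : ∀ x ∈ R, r x = x := by
    rintro _ hx
    obtain ⟨z, rfl⟩ := hrange ▸ hx
    exact hidem z
  obtain ⟨φ, hφ, hrφ, hφE⟩ := exists_extremal_section hr hrR hfix hht.1
  exact ⟨φ '' R, image_subset_iff.mpr fun x _ => hφE x,
    isRetract_image_of_leftInvOn hr hrange hφ hrφ, nonempty_orderIso_image_of_leftInvOn hr hφ hrφ⟩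

theorem stmt11 {α : Type*} [Fintype α] [PartialOrder α]
    (hiso : NoIsolated α) (R : Set α) (hR : IsRetract α R)
    (hht : (∀ x ∈ R, x ∈ minIn R ∪ maxIn R) ∧ ∃ x ∈ R, ∃ y ∈ R, x < y) :
    ∃ Q : Set α, Q ⊆ ESet α ∧ IsRetract α Q ∧ Nonempty (↥Q ≃o ↥R) :=
  stmt11_general R hR hht
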